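/- In the saddle-point setting with inexact preconditioning, where M_U = [[F, Bᵀ],[0, H2]], M̃_U = [[P₁, Bᵀ],[0, H2]], P₁ ∈ ℝ^{n×n} is nonsingular, ‖P₁⁻¹F − I‖_{H1} ≤ C₃η and ‖F⁻¹P₁‖_{H1} ≤ C₄, and H = blockdiag(H1, H2), one has ‖M̃_U⁻¹M_U‖_H ≤ 2 + C₃η and ‖(M̃_U⁻¹M_U)⁻¹‖_H ≤ C₄ + 1. -/

import Mathlib

/-! Both preconditioners share the blocks `Bᵀ` and `H2`, so `M̃_U⁻¹ M_U = blockdiag(P₁⁻¹F, I)`,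
with inverse `blockdiag(F⁻¹P₁, I)` (`F` is invertible because its symmetric part is positive
definite). The `H`-norm of `blockdiag(A, I)` is at most `max(‖A‖_{H1}, 1)`, and
`‖P₁⁻¹F‖_{H1} ≤ 1 + ‖P₁⁻¹F − I‖_{H1}` by the triangle inequality. -/

open Matrix

/-- The `H`-norm of a vector: `‖u‖_H = (uᵀ H u)^{1/2}`. -/
noncomputable def vnorm {α : Type*} [Fintype α] (H : Matrix α α ℝ) (u : α → ℝ) : ℝ :=
  Real.sqrt (u ⬝ᵥ (H *ᵥ u))

/-- The weighted operator norm `‖M‖_{H1,H2} = sup_{v ≠ 0} ‖M v‖_{H2} / ‖v‖_{H1}`.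
For a square matrix, `‖M‖_H = wnorm H H M`; the spectral norm is `wnorm 1 1 M`. -/
noncomputable def wnorm {α β : Type*} [Fintype α] [Fintype β]
    (H1 : Matrix α α ℝ) (H2 : Matrix β β ℝ) (M : Matrix β α ℝ) : ℝ :=
  sSup {r : ℝ | ∃ v : α → ℝ, v ≠ 0 ∧ r = vnorm H2 (M *ᵥ v) / vnorm H1 v}

open scoped Matrix.Norms.L2Operator

open scoped MatrixOrder ComplexOrder in
lemma Matrix.PosSemidef.exists_eq_conjTranspose_mul_self {𝕜 α : Type*} [RCLike 𝕜] [Fintype α]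
    {H : Matrix α α 𝕜} (hH : H.PosSemidef) : ∃ S : Matrix α α 𝕜, H = Sᴴ * S := by
  classical
  obtain ⟨S, rfl⟩ := CStarAlgebra.nonneg_iff_eq_star_mul_self.mp hH.nonneg
  exact ⟨S, rfl⟩

lemma exists_eq_sumElim {α β γ : Type*} (v : α ⊕ β → γ) : ∃ x y, v = Sum.elim x y :=
  ⟨_, _, (Sum.elim_comp_inl_inr v).symm⟩

section
variable {α β γ : Type*} [Fintype α] [Fintype β] [Fintype γ]

lemma vnorm_nonneg (H : Matrix α α ℝ) (u : α → ℝ) : 0 ≤ vnorm H u := Real.sqrt_nonneg _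

lemma vnorm_pos {H : Matrix α α ℝ} (hH : H.PosDef) {u : α → ℝ} (hu : u ≠ 0) : 0 < vnorm H u :=
  Real.sqrt_pos.mpr (hH.dotProduct_mulVec_pos hu)

lemma vnorm_sq {H : Matrix α α ℝ} (hH : H.PosSemidef) (u : α → ℝ) :
    vnorm H u ^ 2 = u ⬝ᵥ (H *ᵥ u) :=
  Real.sq_sqrt (hH.dotProduct_mulVec_nonneg u)

lemma vnorm_conjTranspose_mul_self (S : Matrix γ α ℝ) (u : α → ℝ) :
    vnorm (Sᴴ * S) u = ‖(WithLp.toLp 2 (S *ᵥ u) : EuclideanSpace ℝ γ)‖ := by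
  rw [vnorm, EuclideanSpace.norm_eq, conjTranspose_eq_transpose_of_trivial, ← mulVec_mulVec,
    dotProduct_mulVec, vecMul_transpose]
  simp [dotProduct, sq]

lemma vnorm_add_le {H : Matrix α α ℝ} (hH : H.PosSemidef) (u w : α → ℝ) :
    vnorm H (u + w) ≤ vnorm H u + vnorm H w := by
  obtain ⟨S, rfl⟩ := hH.exists_eq_conjTranspose_mul_self
  simp only [vnorm_conjTranspose_mul_self, mulVec_add, WithLp.toLp_add]
  exact norm_add_le _ _

lemma exists_vnorm_mulVec_le {H1 : Matrix α α ℝ} {H2 : Matrix β β ℝ} (h1 : H1.PosDef)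
    (h2 : H2.PosSemidef) (M : Matrix β α ℝ) :
    ∃ K, ∀ v, vnorm H2 (M *ᵥ v) ≤ K * vnorm H1 v := by
  classical
  obtain ⟨S₁, rfl⟩ := h1.posSemidef.exists_eq_conjTranspose_mul_self
  obtain ⟨S₂, rfl⟩ := h2.exists_eq_conjTranspose_mul_self
  have hS₁ : IsUnit S₁.det := by
    have := h1.det_pos.ne'
    rw [det_mul, det_conjTranspose] at this
    exact isUnit_iff_ne_zero.mpr (right_ne_zero_of_mul this)
  refine ⟨‖S₂ * M * S₁⁻¹‖, fun v => ?_⟩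
  have hv : S₂ *ᵥ (M *ᵥ v) = (S₂ * M * S₁⁻¹) *ᵥ (S₁ *ᵥ v) := by
    rw [mulVec_mulVec, mulVec_mulVec, Matrix.mul_assoc (S₂ * M), nonsing_inv_mul _ hS₁,
      Matrix.mul_one]
  rw [vnorm_conjTranspose_mul_self, vnorm_conjTranspose_mul_self, hv]
  exact l2_opNorm_mulVec _ (WithLp.toLp 2 (S₁ *ᵥ v))

lemma wnorm_nonneg (H1 : Matrix α α ℝ) (H2 : Matrix β β ℝ) (M : Matrix β α ℝ) :
    0 ≤ wnorm H1 H2 M := by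
  refine Real.sSup_nonneg fun r ⟨v, _, hr⟩ => hr ▸ ?_
  exact div_nonneg (vnorm_nonneg _ _) (vnorm_nonneg _ _)

lemma wnorm_le_of_forall {H1 : Matrix α α ℝ} {H2 : Matrix β β ℝ} (h1 : H1.PosDef)
    {M : Matrix β α ℝ} {c : ℝ} (hc : 0 ≤ c) (h : ∀ v, vnorm H2 (M *ᵥ v) ≤ c * vnorm H1 v) :
    wnorm H1 H2 M ≤ c := by
  refine Real.sSup_le (fun r ⟨v, hv, hr⟩ => ?_) hc
  rw [hr, div_le_iff₀ (vnorm_pos h1 hv)]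
  exact h v

lemma vnorm_mulVec_le_wnorm_mul {H1 : Matrix α α ℝ} {H2 : Matrix β β ℝ} (h1 : H1.PosDef)
    (h2 : H2.PosSemidef) (M : Matrix β α ℝ) (v : α → ℝ) :
    vnorm H2 (M *ᵥ v) ≤ wnorm H1 H2 M * vnorm H1 v := by
  rcases eq_or_ne v 0 with rfl | hv
  · simp [vnorm]
  -- Needed because `sSup` of a set of reals that is not bounded above is `0`.
  obtain ⟨K, hK⟩ := exists_vnorm_mulVec_le h1 h2 M
  have hbdd : BddAbove {r : ℝ | ∃ w : α → ℝ, w ≠ 0 ∧ r = vnorm H2 (M *ᵥ w) / vnorm H1 w} := by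
    refine ⟨K, fun r ⟨w, hw, hr⟩ => ?_⟩
    rw [hr, div_le_iff₀ (vnorm_pos h1 hw)]
    exact hK w
  rw [← div_le_iff₀ (vnorm_pos h1 hv)]
  exact le_csSup hbdd ⟨v, hv, rfl⟩

lemma wnorm_add_le {H1 : Matrix α α ℝ} {H2 : Matrix β β ℝ} (h1 : H1.PosDef)
    (h2 : H2.PosSemidef) (A B : Matrix β α ℝ) :
    wnorm H1 H2 (A + B) ≤ wnorm H1 H2 A + wnorm H1 H2 B := by
  refine wnorm_le_of_forall h1 (add_nonneg (wnorm_nonneg _ _ _) (wnorm_nonneg _ _ _)) fun v => ?_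
  calc vnorm H2 ((A + B) *ᵥ v) ≤ vnorm H2 (A *ᵥ v) + vnorm H2 (B *ᵥ v) := by
        rw [add_mulVec]; exact vnorm_add_le h2 _ _
    _ ≤ wnorm H1 H2 A * vnorm H1 v + wnorm H1 H2 B * vnorm H1 v :=
        add_le_add (vnorm_mulVec_le_wnorm_mul h1 h2 A v) (vnorm_mulVec_le_wnorm_mul h1 h2 B v)
    _ = (wnorm H1 H2 A + wnorm H1 H2 B) * vnorm H1 v := by ring

lemma wnorm_one_le [DecidableEq α] {H : Matrix α α ℝ} (hH : H.PosDef) : wnorm H H 1 ≤ 1 :=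
  wnorm_le_of_forall hH zero_le_one fun v => by rw [one_mulVec, one_mul]

lemma sumElim_dotProduct_fromBlocks_mulVec (H1 : Matrix α α ℝ) (H2 : Matrix β β ℝ) (x : α → ℝ)
    (y : β → ℝ) :
    Sum.elim x y ⬝ᵥ (fromBlocks H1 0 0 H2 *ᵥ Sum.elim x y) = x ⬝ᵥ (H1 *ᵥ x) + y ⬝ᵥ (H2 *ᵥ y) := by
  simp [fromBlocks_mulVec, dotProduct, Fintype.sum_sum_type]

lemma Matrix.PosDef.fromBlocks_zero {H1 : Matrix α α ℝ} {H2 : Matrix β β ℝ} (h1 : H1.PosDef)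
    (h2 : H2.PosDef) : (fromBlocks H1 0 0 H2).PosDef := by
  refine .of_dotProduct_mulVec_pos (h1.isHermitian.fromBlocks (by simp) h2.isHermitian)
    fun v hv => ?_
  obtain ⟨x, y, rfl⟩ := exists_eq_sumElim v
  rw [star_trivial, sumElim_dotProduct_fromBlocks_mulVec]
  have hx : 0 ≤ x ⬝ᵥ (H1 *ᵥ x) := h1.posSemidef.dotProduct_mulVec_nonneg x
  have hy : 0 ≤ y ⬝ᵥ (H2 *ᵥ y) := h2.posSemidef.dotProduct_mulVec_nonneg y
  rcases eq_or_ne x 0 with rfl | hx'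
  · have hy' : y ≠ 0 := by rintro rfl; exact hv Sum.elim_zero_zero
    have : 0 < y ⬝ᵥ (H2 *ᵥ y) := h2.dotProduct_mulVec_pos hy'
    linarith
  · have : 0 < x ⬝ᵥ (H1 *ᵥ x) := h1.dotProduct_mulVec_pos hx'
    linarith

lemma wnorm_fromBlocks_one_le [DecidableEq β] {H1 : Matrix α α ℝ} {H2 : Matrix β β ℝ}
    (h1 : H1.PosDef) (h2 : H2.PosDef) (A : Matrix α α ℝ) :
    wnorm (fromBlocks H1 0 0 H2) (fromBlocks H1 0 0 H2) (fromBlocks A 0 0 1) ≤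
      max (wnorm H1 H1 A) 1 := by
  set c := max (wnorm H1 H1 A) 1
  have hc : 0 ≤ c := zero_le_one.trans (le_max_right _ _)
  refine wnorm_le_of_forall (h1.fromBlocks_zero h2) hc fun v => ?_
  obtain ⟨x, y, rfl⟩ := exists_eq_sumElim v
  have hAx : (A *ᵥ x) ⬝ᵥ (H1 *ᵥ (A *ᵥ x)) ≤ c ^ 2 * x ⬝ᵥ (H1 *ᵥ x) := by
    rw [← vnorm_sq h1.posSemidef, ← vnorm_sq h1.posSemidef, ← mul_pow]
    refine pow_le_pow_left₀ (vnorm_nonneg _ _) ?_ 2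
    exact (vnorm_mulVec_le_wnorm_mul h1 h1.posSemidef A x).trans
      (mul_le_mul_of_nonneg_right (le_max_left _ _) (vnorm_nonneg _ _))
  have hy : y ⬝ᵥ (H2 *ᵥ y) ≤ c ^ 2 * y ⬝ᵥ (H2 *ᵥ y) :=
    le_mul_of_one_le_left (h2.posSemidef.dotProduct_mulVec_nonneg y)
      (one_le_pow₀ (le_max_right _ _))
  simp only [fromBlocks_mulVec, Sum.elim_comp_inl, Sum.elim_comp_inr, zero_mulVec, add_zero,
    zero_add, one_mulVec]
  rw [vnorm, vnorm, sumElim_dotProduct_fromBlocks_mulVec, sumElim_dotProduct_fromBlocks_mulVec]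
  rw [← Real.sqrt_sq hc, ← Real.sqrt_mul (sq_nonneg c)]
  exact Real.sqrt_le_sqrt (by linarith)

lemma Matrix.isUnit_det_of_dotProduct_mulVec_pos [DecidableEq α] {F : Matrix α α ℝ}
    (h : ∀ x, x ≠ 0 → 0 < x ⬝ᵥ (F *ᵥ x)) : IsUnit F.det := by
  refine isUnit_iff_ne_zero.mpr fun h0 => ?_
  obtain ⟨v, hv, hFv⟩ := exists_mulVec_eq_zero_iff.mpr h0
  have := h v hv
  rw [hFv] at this
  simp at this

lemma dotProduct_mulVec_symmPart (F : Matrix α α ℝ) (x : α → ℝ) :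
    x ⬝ᵥ ((((1 : ℝ) / 2) • (F + Fᵀ)) *ᵥ x) = x ⬝ᵥ (F *ᵥ x) := by
  rw [smul_mulVec, add_mulVec, mulVec_transpose, dotProduct_smul, dotProduct_add,
    dotProduct_comm x (x ᵥ* F), ← dotProduct_mulVec, smul_eq_mul]
  ring

end

section
variable {α β R : Type*} [Fintype α] [Fintype β] [DecidableEq α] [DecidableEq β] [CommRing R]

lemma Matrix.inv_fromBlocks_zero₂₁_mul_fromBlocks (P F : Matrix α α R) (C : Matrix α β R)
    (D : Matrix β β R) (hP : IsUnit P.det) (hD : IsUnit D.det) :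
    (fromBlocks P C 0 D)⁻¹ * fromBlocks F C 0 D = fromBlocks (P⁻¹ * F) 0 0 1 := by
  have hfac : fromBlocks F C 0 D = fromBlocks P C 0 D * fromBlocks (P⁻¹ * F) 0 0 1 := by
    simp [fromBlocks_multiply, ← Matrix.mul_assoc, mul_nonsing_inv _ hP]
  rw [hfac, nonsing_inv_mul_cancel_left _ _ (by rw [det_fromBlocks_zero₂₁]; exact hP.mul hD)]

lemma Matrix.inv_fromBlocks_one {A : Matrix α α R} (hA : IsUnit A.det) :
    (fromBlocks A 0 0 (1 : Matrix β β R))⁻¹ = fromBlocks A⁻¹ 0 0 1 := by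
  rw [inv_fromBlocks_zero₂₁_of_isUnit_iff _ _ _ (by simpa [isUnit_iff_isUnit_det] using hA)]
  simp

end

theorem stmt_14_general
    {n m : ℕ} (F : Matrix (Fin n) (Fin n) ℝ) (B : Matrix (Fin m) (Fin n) ℝ)
    (H1 : Matrix (Fin n) (Fin n) ℝ) (H2 : Matrix (Fin m) (Fin m) ℝ)
    (η : ℝ) (hη : 0 < η)
    (hH1 : H1 = ((1 : ℝ)/2) • (F + Fᵀ))
    (hH1pd : H1.PosDef) (hH2pd : H2.PosDef)
    (C₃ C₄ : ℝ) (hC3 : 0 < C₃) (hC4 : 0 < C₄)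
    (P₁ : Matrix (Fin n) (Fin n) ℝ) (hP₁ : IsUnit P₁.det)
    (hP1F : wnorm H1 H1 (P₁⁻¹ * F - 1) ≤ C₃ * η)
    (hFP1 : wnorm H1 H1 (F⁻¹ * P₁) ≤ C₄)
    (MU MUt H : Matrix (Fin n ⊕ Fin m) (Fin n ⊕ Fin m) ℝ)
    (hMU : MU = fromBlocks F Bᵀ 0 H2)
    (hMUt : MUt = fromBlocks P₁ Bᵀ 0 H2)
    (hH : H = fromBlocks H1 0 0 H2) :
    wnorm H H (MUt⁻¹ * MU) ≤ 2 + C₃ * η ∧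
    wnorm H H (MUt⁻¹ * MU)⁻¹ ≤ C₄ + 1 := by
  have hF : IsUnit F.det := isUnit_det_of_dotProduct_mulVec_pos fun x hx =>
    dotProduct_mulVec_symmPart F x ▸ hH1 ▸ hH1pd.dotProduct_mulVec_pos hx
  have hPF : IsUnit (P₁⁻¹ * F).det := by
    rw [det_mul]; exact (isUnit_nonsing_inv_det _ hP₁).mul hF
  have hT : MUt⁻¹ * MU = fromBlocks (P₁⁻¹ * F) 0 0 1 := by
    rw [hMUt, hMU]
    exact inv_fromBlocks_zero₂₁_mul_fromBlocks _ _ _ _ hP₁ hH2pd.det_pos.ne'.isUnit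
  have hTinv : (MUt⁻¹ * MU)⁻¹ = fromBlocks (F⁻¹ * P₁) 0 0 1 := by
    rw [hT, inv_fromBlocks_one hPF, Matrix.mul_inv_rev, nonsing_inv_nonsing_inv _ hP₁]
  have hPF_le : wnorm H1 H1 (P₁⁻¹ * F) ≤ C₃ * η + 1 := calc
    wnorm H1 H1 (P₁⁻¹ * F) = wnorm H1 H1 ((P₁⁻¹ * F - 1) + 1) := by rw [sub_add_cancel]
    _ ≤ wnorm H1 H1 (P₁⁻¹ * F - 1) + wnorm H1 H1 1 := wnorm_add_le hH1pd hH1pd.posSemidef _ _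
    _ ≤ C₃ * η + 1 := add_le_add hP1F (wnorm_one_le hH1pd)
  have hCη : 0 < C₃ * η := mul_pos hC3 hη
  rw [hTinv, hT, hH]
  exact ⟨(wnorm_fromBlocks_one_le hH1pd hH2pd _).trans (max_le (by linarith) (by linarith)),
    (wnorm_fromBlocks_one_le hH1pd hH2pd _).trans (max_le (by linarith) (by linarith))⟩

theorem stmt_14
    {n m : ℕ} (F : Matrix (Fin n) (Fin n) ℝ) (B : Matrix (Fin m) (Fin n) ℝ)
    (H1 N : Matrix (Fin n) (Fin n) ℝ) (H2 : Matrix (Fin m) (Fin m) ℝ)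
    (η C₁ C₂ : ℝ) (hη : 0 < η) (hC1 : 0 < C₁) (hC2 : 0 < C₂)
    (hH1 : H1 = ((1 : ℝ)/2) • (F + Fᵀ)) (hN : N = ((1 : ℝ)/2) • (F - Fᵀ))
    (hH1pd : H1.PosDef) (hH2pd : H2.PosDef)
    (hBrank : B.rank = m)
    (hNnorm : wnorm H1 H1⁻¹ N ≤ η)
    (hBnorm : wnorm H1 H2⁻¹ B ≤ C₁)
    (hinfsup : ∀ x : Fin m → ℝ, x ≠ 0 → C₂ * vnorm H2 x ≤ vnorm H1⁻¹ (Bᵀ *ᵥ x))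
    (C₃ C₄ : ℝ) (hC3 : 0 < C₃) (hC4 : 0 < C₄)
    (P₁ : Matrix (Fin n) (Fin n) ℝ) (hP₁ : IsUnit P₁.det)
    (hP1F : wnorm H1 H1 (P₁⁻¹ * F - 1) ≤ C₃ * η)
    (hFP1 : wnorm H1 H1 (F⁻¹ * P₁) ≤ C₄)
    (MU MUt H : Matrix (Fin n ⊕ Fin m) (Fin n ⊕ Fin m) ℝ)
    (hMU : MU = fromBlocks F Bᵀ 0 H2)
    (hMUt : MUt = fromBlocks P₁ Bᵀ 0 H2)
    (hH : H = fromBlocks H1 0 0 H2) :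
    wnorm H H (MUt⁻¹ * MU) ≤ 2 + C₃ * η ∧
    wnorm H H (MUt⁻¹ * MU)⁻¹ ≤ C₄ + 1 :=
  stmt_14_general F B H1 H2 η hη hH1 hH1pd hH2pd C₃ C₄ hC3 hC4 P₁ hP₁ hP1F hFP1 MU MUt H hMU hMUt hH
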